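/- arXiv:2003.03208 — 2 statements merged into one kernel-verified Lean document; each statement's English description precedes it below -/
import Mathlib

section
/- Define a₁ = 1 and, for integers k ≥ 2, a_k = (1/2)·√( √(9^{k+1} − 34·3^k + 25) − 3^k + 5 ). Then a₂ = √(2√7 − 1), the sequence (a_k) is strictly increasing, and for every k ≥ 2 the ratio satisfies √3 < a_{k+1}/a_k ≤ √((√1417 − 11)/(4√7 − 2)), with equality on the right only at k = 2; moreover a_{k+1}/a_k is monotonically decreasing in k for k ≥ 2. -/
/-!
With `t = 3^k` one has `4 a_k² = f t` for `f = freqSq`, `f t = √(9t² - 34t + 25) - t + 5`.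
Expanding the root at infinity, `f t = 2t - 2/3 - 32/(27 t) + O(1/t²)`, and the two-sided bound
`2t² - 2t/3 - 8/5 ≤ t f t < 2t² - 2t/3 - 32/27` (for `t ≥ 9`) is already sharp enough to give
`3 f t < f (3t)` and `f (9t) f t < f (3t)²`. These say that `(a_{k+1}/a_k)² = f (3t) / f t`
exceeds `3` and strictly decreases in `k`, so its maximum is the value at `k = 2`.
-/

noncomputable def aseq (k : ℕ) : ℝ :=
  if k ≤ 1 then 1
  else (1 / 2) * Real.sqrt
    (Real.sqrt ((9 : ℝ) ^ (k + 1) - 34 * 3 ^ k + 25) - 3 ^ k + 5)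

open Real

noncomputable def freqSq (t : ℝ) : ℝ := √(9 * t ^ 2 - 34 * t + 25) - t + 5

lemma mul_freqSq_lt {t : ℝ} (ht : 3 ≤ t) : t * freqSq t < 2 * t ^ 2 - 2 / 3 * t - 32 / 27 := by
  have hD : 0 ≤ 9 * t ^ 2 - 34 * t + 25 := by nlinarith
  have hs := sq_sqrt hD
  -- `(3t² - 17t/3 - 32/27)² - t² (9t² - 34t + 25) = 1088 t / 81 + 1024 / 729`
  have hroot : t * √(9 * t ^ 2 - 34 * t + 25) < 3 * t ^ 2 - 17 / 3 * t - 32 / 27 := by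
    nlinarith
  unfold freqSq
  nlinarith

lemma le_mul_freqSq {t : ℝ} (ht : 9 ≤ t) : 2 * t ^ 2 - 2 / 3 * t - 8 / 5 ≤ t * freqSq t := by
  have hD : 0 ≤ 9 * t ^ 2 - 34 * t + 25 := by nlinarith
  have hs := sq_sqrt hD
  have hroot : 3 * t ^ 2 - 17 / 3 * t - 8 / 5 ≤ t * √(9 * t ^ 2 - 34 * t + 25) := by
    refine (pow_le_pow_iff_left₀ (by nlinarith) (by positivity) two_ne_zero).mp ?_
    rw [mul_pow, hs]
    nlinarith
  unfold freqSq
  nlinarith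

lemma freqSq_pos {t : ℝ} (ht : 9 ≤ t) : 0 < freqSq t := by
  nlinarith [le_mul_freqSq ht]

lemma three_mul_freqSq_lt {t : ℝ} (ht : 9 ≤ t) : 3 * freqSq t < freqSq (3 * t) := by
  have h1 := mul_freqSq_lt (show 3 ≤ t by linarith)
  have h3 := le_mul_freqSq (show 9 ≤ 3 * t by linarith)
  nlinarith

lemma freqSq_mul_lt_sq {t : ℝ} (ht : 9 ≤ t) :
    freqSq (9 * t) * freqSq t < freqSq (3 * t) ^ 2 := by
  have h1 := mul_freqSq_lt (show 3 ≤ t by linarith)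
  have h9 := mul_freqSq_lt (show 3 ≤ 9 * t by linarith)
  have h3 := le_mul_freqSq (show 9 ≤ 3 * t by linarith)
  have p1 := freqSq_pos ht
  have p9 := freqSq_pos (show 9 ≤ 9 * t by linarith)
  have hprod : (9 * t * freqSq (9 * t)) * (t * freqSq t)
      < (162 * t ^ 2 - 6 * t - 32 / 27) * (2 * t ^ 2 - 2 / 3 * t - 32 / 27) :=
    mul_lt_mul'' (by linarith) h1 (by positivity) (by positivity)
  have hsq : (18 * t ^ 2 - 2 * t - 8 / 5) ^ 2 ≤ (3 * t * freqSq (3 * t)) ^ 2 :=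
    pow_le_pow_left₀ (by nlinarith) (by linarith) 2
  have hpoly : (162 * t ^ 2 - 6 * t - 32 / 27) * (2 * t ^ 2 - 2 / 3 * t - 32 / 27)
      < (18 * t ^ 2 - 2 * t - 8 / 5) ^ 2 := by
    nlinarith
  nlinarith

lemma nine_le_three_pow {k : ℕ} (hk : 2 ≤ k) : (9 : ℝ) ≤ 3 ^ k :=
  le_of_eq_of_le (by norm_num) (pow_le_pow_right₀ (by norm_num) hk)

lemma aseq_eq_sqrt_freqSq {k : ℕ} (hk : 2 ≤ k) : aseq k = √(freqSq (3 ^ k)) / 2 := by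
  have h9 : (9 : ℝ) ^ (k + 1) = 9 * ((3 : ℝ) ^ k) ^ 2 := by
    rw [pow_succ, show (9 : ℝ) = 3 ^ 2 by norm_num, ← pow_mul, ← pow_mul, mul_comm k]
    ring
  rw [aseq, if_neg (by omega), freqSq, h9]
  ring

lemma aseq_pos {k : ℕ} (hk : 1 ≤ k) : 0 < aseq k := by
  rcases hk.eq_or_lt with rfl | hk
  · simp [aseq]
  · rw [aseq_eq_sqrt_freqSq hk]
    have := freqSq_pos (nine_le_three_pow hk)
    positivity

lemma aseq_succ_div_aseq {k : ℕ} (hk : 2 ≤ k) :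
    aseq (k + 1) / aseq k = √(freqSq (3 * 3 ^ k) / freqSq (3 ^ k)) := by
  have := freqSq_pos (show 9 ≤ 3 * (3 : ℝ) ^ k by linarith [nine_le_three_pow hk])
  rw [aseq_eq_sqrt_freqSq hk, aseq_eq_sqrt_freqSq (by omega), pow_succ', sqrt_div this.le]
  ring

lemma sqrt_three_lt_aseq_succ_div_aseq {k : ℕ} (hk : 2 ≤ k) : √3 < aseq (k + 1) / aseq k := by
  have ht := nine_le_three_pow hk
  rw [aseq_succ_div_aseq hk]
  exact sqrt_lt_sqrt (by norm_num) ((lt_div_iff₀ (freqSq_pos ht)).mpr (three_mul_freqSq_lt ht))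

lemma strictAnti_aseq_succ_div_aseq : StrictAnti fun n ↦ aseq (n + 3) / aseq (n + 2) := by
  refine strictAnti_nat_of_succ_lt fun n ↦ ?_
  set t : ℝ := 3 ^ (n + 2)
  have ht : 9 ≤ t := nine_le_three_pow (by omega)
  have p1 := freqSq_pos ht
  have p3 := freqSq_pos (show 9 ≤ 3 * t by linarith)
  have p9 := freqSq_pos (show 9 ≤ 3 * (3 * t) by linarith)
  have key := freqSq_mul_lt_sq ht
  rw [show 9 * t = 3 * (3 * t) by ring] at key
  rw [aseq_succ_div_aseq (show 2 ≤ n + 2 by omega),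
    aseq_succ_div_aseq (show 2 ≤ n + 1 + 2 by omega),
    show (3 : ℝ) ^ (n + 1 + 2) = 3 * t by rw [pow_succ']]
  refine sqrt_lt_sqrt (by positivity) ((div_lt_div_iff₀ p3 p1).mpr ?_)
  nlinarith

lemma freqSq_nine : freqSq 9 = 8 * √7 - 4 := by
  rw [freqSq, show (9 : ℝ) * 9 ^ 2 - 34 * 9 + 25 = 8 ^ 2 * 7 by norm_num,
    sqrt_mul' _ (by norm_num), sqrt_sq (by norm_num)]
  ring

lemma freqSq_twentySeven : freqSq 27 = 2 * √1417 - 22 := by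
  rw [freqSq, show (9 : ℝ) * 27 ^ 2 - 34 * 27 + 25 = 2 ^ 2 * 1417 by norm_num,
    sqrt_mul' _ (by norm_num), sqrt_sq (by norm_num)]
  ring

lemma aseq_two : aseq 2 = √(2 * √7 - 1) := by
  rw [aseq_eq_sqrt_freqSq le_rfl, show (3 : ℝ) ^ 2 = 9 by norm_num, freqSq_nine,
    show 8 * √7 - 4 = 2 ^ 2 * (2 * √7 - 1) by ring, sqrt_mul (by norm_num), sqrt_sq zero_le_two]
  ring

lemma aseq_three_div_aseq_two :
    aseq 3 / aseq 2 = √((√1417 - 11) / (4 * √7 - 2)) := by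
  have h7 : 2 < √7 := lt_sqrt_of_sq_lt (by norm_num)
  rw [aseq_succ_div_aseq le_rfl, show (3 : ℝ) * 3 ^ 2 = 27 by norm_num,
    show (3 : ℝ) ^ 2 = 9 by norm_num, freqSq_nine, freqSq_twentySeven]
  congr 1
  rw [div_eq_div_iff (by linarith) (by linarith)]
  ring

lemma aseq_lt_aseq_succ {k : ℕ} (hk : 1 ≤ k) : aseq k < aseq (k + 1) := by
  rcases hk.eq_or_lt with rfl | hk
  · have h7 : 1 < √7 := lt_sqrt_of_sq_lt (by norm_num)
    rw [aseq_two, aseq, if_pos le_rfl, lt_sqrt zero_le_one]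
    linarith
  · have h3 : 1 < √3 := lt_sqrt_of_sq_lt (by norm_num)
    exact (one_lt_div (aseq_pos hk.le)).mp (h3.trans (sqrt_three_lt_aseq_succ_div_aseq hk))

/-- `a₂ = √(2√7-1)`, the sequence is strictly increasing, for `k ≥ 2` the ratio
`a_{k+1}/a_k` lies in `(√3, √((√1417-11)/(4√7-2))]` with equality on the right
only at `k = 2`, and the ratio is monotonically decreasing for `k ≥ 2`. -/
theorem stmt14 :
    aseq 2 = Real.sqrt (2 * Real.sqrt 7 - 1) ∧
    (∀ k : ℕ, 1 ≤ k → aseq k < aseq (k + 1)) ∧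
    (∀ k : ℕ, 2 ≤ k →
      Real.sqrt 3 < aseq (k + 1) / aseq k ∧
      aseq (k + 1) / aseq k
        ≤ Real.sqrt ((Real.sqrt 1417 - 11) / (4 * Real.sqrt 7 - 2))) ∧
    (∀ k : ℕ, 2 ≤ k →
      aseq (k + 1) / aseq k
          = Real.sqrt ((Real.sqrt 1417 - 11) / (4 * Real.sqrt 7 - 2)) → k = 2) ∧
    (∀ k : ℕ, 2 ≤ k → aseq (k + 2) / aseq (k + 1) < aseq (k + 1) / aseq k) := by
  have hanti := strictAnti_aseq_succ_div_aseq
  rw [← aseq_three_div_aseq_two]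
  refine ⟨aseq_two, fun k ↦ aseq_lt_aseq_succ,
    fun k hk ↦ ⟨sqrt_three_lt_aseq_succ_div_aseq hk, ?_⟩, fun k hk heq ↦ ?_, fun k hk ↦ ?_⟩
    <;> obtain ⟨n, rfl⟩ := Nat.exists_eq_add_of_le' hk
  · exact hanti.antitone n.zero_le
  · simpa using hanti.injective heq
  · exact hanti n.lt_succ_self
end

section
/- Let B be the Hessian of the planar Newtonian potential at a collinear central configuration r = (ξ₁,0,…,ξ_N,0) with multiplier λ. Then each 2×2 off-diagonal block of B equals (m_j m_k / r_{jk}³)·diag(−2, 1). Consequently, if v ∈ ℝ^N is an eigenvector of the collinear operator λ·I_N + M_1^{-1}·B_1 (the one-dimensional problem, M_1 = diag(m_1,…,m_N)) with eigenvalue ι, then the planar vector v_h = (v_1,0,v_2,0,…,v_N,0) satisfies (λI + M^{-1}B) v_h = ι·v_h, and its rotation v_h^⊥ = (0,v_1,0,v_2,…,0,v_N) satisfies (λI + M^{-1}B) v_h^⊥ = ((3λ − ι)/2)·v_h^⊥. -/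
open scoped BigOperators

/-- The Newtonian potential of `N` planar point masses. -/
noncomputable def newtonU (N : ℕ) (m : Fin N → ℝ)
    (r : EuclideanSpace ℝ (Fin N × Fin 2)) : ℝ :=
  ∑ p ∈ Finset.univ.filter (fun p : Fin N × Fin N => p.1 < p.2),
    m p.1 * m p.2 /
      Real.sqrt ((r (p.2, 0) - r (p.1, 0)) ^ 2 + (r (p.2, 1) - r (p.1, 1)) ^ 2)

/-!
The potential is a sum over pairs of `m_a m_b ‖z‖⁻¹` composed with the linear maps
`x ↦ x_b - x_a`, so its Hessian is the sum of the pulled-back Hessians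
`(3 z zᵀ - ‖z‖² I) / ‖z‖⁵` of the Newtonian kernel. At a collinear configuration every
`z = x_b - x_a` is horizontal, so each pair contributes
`m_a m_b / |ξ_b - ξ_a|³ · (e_b - e_a)(e_b - e_a)ᵀ ⊗ diag(2, -1)`. Hence `B = W ⊗ diag(-2, 1)` for a
single `N × N` matrix `W` whose off-diagonal entries are `m_j m_k / r_{jk}³`: the horizontal and
vertical parts of `λ I + M⁻¹ B` are `λ - 2 M⁻¹ W` and `λ + M⁻¹ W`, and the second equals
`(3λ - (λ - 2 M⁻¹ W)) / 2`.
-/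

open scoped RealInnerProductSpace

section SecondDerivative

variable {𝕜 E F G : Type*} [NontriviallyNormedField 𝕜]
  [NormedAddCommGroup E] [NormedSpace 𝕜 E] [NormedAddCommGroup F] [NormedSpace 𝕜 F]
  [NormedAddCommGroup G] [NormedSpace 𝕜 G]

theorem fderiv_fderiv_comp_clm_apply (L : E →L[𝕜] F) {φ : F → G} {x : E}
    (hφ : ContDiffAt 𝕜 2 φ (L x)) (v w : E) :
    fderiv 𝕜 (fderiv 𝕜 (φ ∘ L)) x v w = fderiv 𝕜 (fderiv 𝕜 φ) (L x) (L v) (L w) := by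
  have hdiff : ∀ᶠ y in nhds x, DifferentiableAt 𝕜 φ (L y) :=
    L.continuous.continuousAt.eventually <|
      (hφ.eventually (by simp)).mono fun _ h => h.differentiableAt (by simp)
  have hfderiv : fderiv 𝕜 (φ ∘ L) =ᶠ[nhds x] fun y => (fderiv 𝕜 φ (L y)).comp L := by
    filter_upwards [hdiff] with y hy
    rw [fderiv_comp y hy L.differentiableAt, L.fderiv]
  have hφ' : HasFDerivAt (fderiv 𝕜 φ) (fderiv 𝕜 (fderiv 𝕜 φ) (L x)) (L x) :=
    ((hφ.fderiv_right (m := 1) (by norm_num)).differentiableAt (by norm_num)).hasFDerivAt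
  have hcomp : HasFDerivAt (fun y => (fderiv 𝕜 φ (L y)).comp L) _ x :=
    (hφ'.comp x L.hasFDerivAt).clm_comp (hasFDerivAt_const L x)
  rw [hfderiv.fderiv_eq, hcomp.fderiv]
  simp

theorem fderiv_fderiv_sum_mul_apply {ι : Type*} {s : Finset ι} {c : ι → 𝕜} {f : ι → E → 𝕜}
    {x : E} (hf : ∀ i ∈ s, ContDiffAt 𝕜 2 (f i) x) (v w : E) :
    fderiv 𝕜 (fderiv 𝕜 fun y => ∑ i ∈ s, c i * f i y) x v w
      = ∑ i ∈ s, c i * fderiv 𝕜 (fderiv 𝕜 (f i)) x v w := by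
  have hf' : ∀ i ∈ s, ContDiffAt 𝕜 (2 : ℕ) (f i) x := hf
  calc fderiv 𝕜 (fderiv 𝕜 fun y => ∑ i ∈ s, c i * f i y) x v w
      = iteratedFDeriv 𝕜 2 (fun y => ∑ i ∈ s, c i • f i y) x ![v, w] := by
        simp [iteratedFDeriv_two_apply]
    _ = ∑ i ∈ s, c i • iteratedFDeriv 𝕜 2 (f i) x ![v, w] := by
        rw [iteratedFDeriv_fun_sum_apply fun i hi => (hf' i hi).const_smul (c i),
          sum_apply]
        exact Finset.sum_congr rfl fun i hi => by
          rw [iteratedFDeriv_const_smul_apply' (hf' i hi)]; rfl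
    _ = ∑ i ∈ s, c i * fderiv 𝕜 (fderiv 𝕜 (f i)) x v w := by
        simp [iteratedFDeriv_two_apply]

end SecondDerivative

section InverseNorm

variable {E : Type*} [NormedAddCommGroup E] [InnerProductSpace ℝ E]

theorem hasFDerivAt_inv_norm {z : E} (hz : z ≠ 0) :
    HasFDerivAt (fun y : E => ‖y‖⁻¹) (-(‖z‖⁻¹ ^ 3) • innerSL ℝ z) z := by
  have hz2 : ‖z‖ ^ 2 ≠ 0 := by positivity
  have hsqrt := ((Real.hasDerivAt_sqrt hz2).inv (by positivity)).comp_hasFDerivAt z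
    (hasStrictFDerivAt_norm_sq z).hasFDerivAt
  have hfun : ((fun s => √s)⁻¹ ∘ fun y : E => ‖y‖ ^ 2) = fun y => ‖y‖⁻¹ := by
    funext y; simp [Real.sqrt_sq (norm_nonneg y)]
  rw [hfun] at hsqrt
  refine hsqrt.congr_fderiv ?_
  rw [Real.sqrt_sq (norm_nonneg z)]
  ext v
  simp only [one_div, mul_inv_rev, smul_apply, coe_innerSL_apply, nsmul_eq_mul,
    Nat.cast_ofNat, smul_eq_mul, inv_pow, neg_smul, neg_apply]
  field_simp

theorem fderiv_fderiv_inv_norm_apply {z : E} (hz : z ≠ 0) (v w : E) :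
    fderiv ℝ (fderiv ℝ fun y : E => ‖y‖⁻¹) z v w
      = (3 * ⟪z, v⟫ * ⟪z, w⟫ - ‖z‖ ^ 2 * ⟪v, w⟫) / ‖z‖ ^ 5 := by
  have hgrad : fderiv ℝ (fun y : E => ‖y‖⁻¹) =ᶠ[nhds z]
      fun y => -(‖y‖⁻¹ ^ 3) • innerSL ℝ y := by
    filter_upwards [eventually_ne_nhds hz] with y hy using (hasFDerivAt_inv_norm hy).fderiv
  have hcoef : HasFDerivAt (fun y : E => -(‖y‖⁻¹ ^ 3)) _ z :=
    ((hasFDerivAt_inv_norm hz).pow 3).neg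
  have hhess : HasFDerivAt (fun y : E => -(‖y‖⁻¹ ^ 3) • innerSL ℝ y) _ z :=
    hcoef.smul (innerSL ℝ).hasFDerivAt
  rw [hgrad.fderiv_eq, hhess.fderiv]
  have hz' : ‖z‖ ≠ 0 := norm_ne_zero_iff.2 hz
  simp only [inv_pow, neg_smul, Nat.add_one_sub_one, nsmul_eq_mul, Nat.cast_ofNat, smul_neg, neg_neg,
    add_apply, neg_apply, smul_apply,
    ContinuousLinearMap.smulRight_apply, innerSL_apply_apply ℝ, smul_eq_mul]
  field_simp
  ring

end InverseNorm

theorem inner_fderiv_gradient_apply {F : Type*} [NormedAddCommGroup F] [InnerProductSpace ℝ F]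
    [CompleteSpace F] (f : F → ℝ) (x v w : F) :
    ⟪fderiv ℝ (gradient f) x v, w⟫ = fderiv ℝ (fderiv ℝ f) x v w := by
  rw [show gradient f = (InnerProductSpace.toDual ℝ F).symm ∘ fderiv ℝ f from rfl,
    LinearIsometryEquiv.comp_fderiv]
  exact InnerProductSpace.toDual_symm_apply

namespace EuclideanSpace

variable {ι : Type*} [Fintype ι] [DecidableEq ι]

theorem apply_eq_inner_single (y : EuclideanSpace ℝ ι) (p : ι) : y p = ⟪y, single p 1⟫ := by
  simp [inner_single_right]

theorem clm_apply_eq_sum {ι' : Type*} [Fintype ι'] (B : EuclideanSpace ℝ ι →L[ℝ] EuclideanSpace ℝ ι')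
    (w : EuclideanSpace ℝ ι) (p : ι') : B w p = ∑ q, w q * B (single q 1) p := by
  conv_lhs => rw [← (basisFun ι ℝ).sum_repr w]
  simp

theorem apply_eq_of_diagonal_kronecker {κ : Type*} [Fintype κ] [DecidableEq κ]
    {B : EuclideanSpace ℝ (ι × κ) →L[ℝ] EuclideanSpace ℝ (ι × κ)} {d : κ → ℝ} {L : ι → ι → ℝ}
    (hB : ∀ j k c c', B (single (k, c') 1) (j, c) = (if c = c' then d c else 0) * L j k)
    {v : ι → ℝ} {c : κ} {w : EuclideanSpace ℝ (ι × κ)}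
    (hw : ∀ q, w q = if q.2 = c then v q.1 else 0) (j : ι) (c' : κ) :
    B w (j, c') = (if c' = c then d c' else 0) * ∑ k, L j k * v k := by
  rw [clm_apply_eq_sum, Fintype.sum_prod_type]
  by_cases h : c' = c <;> simp [hw, hB, h, Finset.mul_sum, mul_comm, mul_left_comm]

end EuclideanSpace

namespace PlanarNBody

variable {N : ℕ}

def pairs (N : ℕ) : Finset (Fin N × Fin N) := Finset.univ.filter fun p => p.1 < p.2

noncomputable def position (a : Fin N) :
    EuclideanSpace ℝ (Fin N × Fin 2) →L[ℝ] EuclideanSpace ℝ (Fin 2) :=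
  (EuclideanSpace.equiv (Fin 2) ℝ).symm.toContinuousLinearMap.comp
    (ContinuousLinearMap.pi fun c => EuclideanSpace.proj (a, c))

@[simp]
theorem position_apply (a : Fin N) (x : EuclideanSpace ℝ (Fin N × Fin 2)) (c : Fin 2) :
    position a x c = x (a, c) := rfl

theorem newtonU_eq_sum_inv_norm (m : Fin N → ℝ) (x : EuclideanSpace ℝ (Fin N × Fin 2)) :
    newtonU N m x = ∑ p ∈ pairs N, m p.1 * m p.2 * ‖(position p.2 - position p.1) x‖⁻¹ := by
  refine Finset.sum_congr rfl fun p _ => ?_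
  rw [EuclideanSpace.norm_eq, Fin.sum_univ_two, div_eq_mul_inv]
  simp

theorem fderiv_fderiv_newtonU_apply (m : Fin N → ℝ) {x : EuclideanSpace ℝ (Fin N × Fin 2)}
    (hx : ∀ p ∈ pairs N, (position p.2 - position p.1) x ≠ 0)
    (v w : EuclideanSpace ℝ (Fin N × Fin 2)) :
    fderiv ℝ (fderiv ℝ (newtonU N m)) x v w
      = ∑ p ∈ pairs N, m p.1 * m p.2 * fderiv ℝ (fderiv ℝ fun z => ‖z‖⁻¹)
          ((position p.2 - position p.1) x) ((position p.2 - position p.1) v)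
          ((position p.2 - position p.1) w) := by
  have hkernel : ∀ p ∈ pairs N,
      ContDiffAt ℝ 2 (fun z : EuclideanSpace ℝ (Fin 2) => ‖z‖⁻¹) ((position p.2 - position p.1) x) :=
    fun p hp => (contDiffAt_norm ℝ (hx p hp)).inv (norm_ne_zero_iff.2 (hx p hp))
  rw [funext (newtonU_eq_sum_inv_norm m), fderiv_fderiv_sum_mul_apply
    (f := fun p y => ‖(position p.2 - position p.1) y‖⁻¹)
    fun p hp => (hkernel p hp).comp x (position p.2 - position p.1).contDiff.contDiffAt]
  exact Finset.sum_congr rfl fun p hp => by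
    rw [← fderiv_fderiv_comp_clm_apply _ (hkernel p hp)]; rfl

def edge (a b : Fin N) : Fin N → ℝ := Pi.single b 1 - Pi.single a 1

theorem position_sub_single (a b k : Fin N) (c : Fin 2) :
    (position b - position a) (EuclideanSpace.single (k, c) 1)
      = EuclideanSpace.single c (edge a b k) := by
  ext c'
  by_cases h : c' = c <;> simp [h, edge, Pi.single_apply, eq_comm]

theorem position_sub_collinear {ξ : Fin N → ℝ} {r : EuclideanSpace ℝ (Fin N × Fin 2)}
    (hr : ∀ p : Fin N × Fin 2, r p = if p.2 = 0 then ξ p.1 else 0) (a b : Fin N) :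
    (position b - position a) r = EuclideanSpace.single 0 (ξ b - ξ a) := by
  ext c
  by_cases h : c = 0 <;> simp [h, hr]

/-- The matrix `W`: minus the Laplacian of the complete graph on the bodies with edge weights
`m_a m_b / |ξ_b - ξ_a|³`. -/
noncomputable def collinearCoupling (m ξ : Fin N → ℝ) (j k : Fin N) : ℝ :=
  -∑ p ∈ pairs N, m p.1 * m p.2 * (edge p.1 p.2 j * edge p.1 p.2 k) / |ξ p.2 - ξ p.1| ^ 3

theorem fderiv_gradient_newtonU_collinear (m : Fin N → ℝ) {ξ : Fin N → ℝ}
    (hξ : Function.Injective ξ) {r : EuclideanSpace ℝ (Fin N × Fin 2)}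
    (hr : ∀ p : Fin N × Fin 2, r p = if p.2 = 0 then ξ p.1 else 0) (j k : Fin N) (i i' : Fin 2) :
    fderiv ℝ (gradient (newtonU N m)) r (EuclideanSpace.single (k, i') 1) (j, i)
      = (if i = i' then (if i = 0 then -2 else 1) else 0) * collinearCoupling m ξ j k := by
  have hsep : ∀ p ∈ pairs N, ξ p.2 - ξ p.1 ≠ 0 := fun p hp =>
    sub_ne_zero.2 <| hξ.ne (Finset.mem_filter.1 hp).2.ne'
  rw [EuclideanSpace.apply_eq_inner_single, inner_fderiv_gradient_apply,
    fderiv_fderiv_newtonU_apply m fun p hp => by simpa [position_sub_collinear hr] using hsep p hp,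
    collinearCoupling, mul_neg, Finset.mul_sum, ← Finset.sum_neg_distrib]
  refine Finset.sum_congr rfl fun p hp => ?_
  have hd := hsep p hp
  rw [position_sub_collinear hr, position_sub_single, position_sub_single,
    fderiv_fderiv_inv_norm_apply (by simpa using hd)]
  have h5 : |ξ p.2 - ξ p.1| ^ 5 = (ξ p.2 - ξ p.1) ^ 2 * |ξ p.2 - ξ p.1| ^ 3 := by
    rw [← sq_abs (ξ p.2 - ξ p.1)]; ring
  fin_cases i <;> fin_cases i' <;>
    simp only [Fin.zero_eta, Fin.mk_one, Fin.isValue, EuclideanSpace.inner_single_right,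
      PiLp.single_eq_same, PiLp.single_eq_of_ne, ne_eq, one_ne_zero, zero_ne_one, not_false_eq_true,
      Real.ringHom_apply, PiLp.norm_single, Real.norm_eq_abs, sq_abs, h5, ↓reduceIte, mul_zero,
      zero_mul, sub_self, zero_sub, zero_div, neg_zero, neg_mul, neg_neg, one_mul]
  · field_simp
    ring
  · field_simp

theorem edge_mul_edge {a b j k : Fin N} (hab : a < b) (hjk : j < k) :
    edge a b j * edge a b k = if (a, b) = (j, k) then -1 else 0 := by
  simp only [edge, Pi.sub_apply, Pi.single_apply, Prod.mk.injEq]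
  grind

theorem collinearCoupling_comm (m ξ : Fin N → ℝ) (j k : Fin N) :
    collinearCoupling m ξ j k = collinearCoupling m ξ k j := by
  simp only [collinearCoupling, mul_comm (edge _ _ j)]

theorem collinearCoupling_of_lt (m ξ : Fin N → ℝ) {j k : Fin N} (hjk : j < k) :
    collinearCoupling m ξ j k = m j * m k / |ξ k - ξ j| ^ 3 := by
  rw [collinearCoupling, Finset.sum_congr rfl fun p hp => by
    rw [edge_mul_edge (Finset.mem_filter.1 hp).2 hjk]]
  simp [pairs, ite_div, Finset.sum_ite_eq', hjk, neg_div]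

theorem collinearCoupling_of_ne (m ξ : Fin N → ℝ) {j k : Fin N} (hjk : j ≠ k) :
    collinearCoupling m ξ j k = m j * m k / |ξ k - ξ j| ^ 3 := by
  rcases hjk.lt_or_gt with h | h
  · exact collinearCoupling_of_lt m ξ h
  · rw [collinearCoupling_comm, collinearCoupling_of_lt m ξ h, mul_comm, abs_sub_comm]

end PlanarNBody

open PlanarNBody in
theorem stmt19_general (N : ℕ) (m : Fin N → ℝ)
    (ξ : Fin N → ℝ) (hξ : Function.Injective ξ)
    (r : EuclideanSpace ℝ (Fin N × Fin 2))
    (hr : ∀ p : Fin N × Fin 2, r p = if p.2 = 0 then ξ p.1 else 0)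
    (lam : ℝ)
    (B : EuclideanSpace ℝ (Fin N × Fin 2) →L[ℝ] EuclideanSpace ℝ (Fin N × Fin 2))
    (hB : B = fderiv ℝ (gradient (newtonU N m)) r) :
    (∀ j k : Fin N, j ≠ k → ∀ i i' : Fin 2,
      B (EuclideanSpace.single (k, i') 1) (j, i)
        = m j * m k / |ξ k - ξ j| ^ 3 *
            (if i = i' then (if i = 0 then -2 else 1) else 0)) ∧
    (∀ (v : Fin N → ℝ) (ι : ℝ),
      (∀ j : Fin N, lam * v j + (m j)⁻¹ *
          (∑ k : Fin N, B (EuclideanSpace.single (k, (0 : Fin 2)) 1) (j, 0) * v k)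
        = ι * v j) →
      ∀ (vh vperp : EuclideanSpace ℝ (Fin N × Fin 2)),
        (∀ p : Fin N × Fin 2, vh p = if p.2 = 0 then v p.1 else 0) →
        (∀ p : Fin N × Fin 2, vperp p = if p.2 = 1 then v p.1 else 0) →
        (∀ p : Fin N × Fin 2,
          lam * vh p + (m p.1)⁻¹ * B vh p = ι * vh p) ∧
        (∀ p : Fin N × Fin 2,
          lam * vperp p + (m p.1)⁻¹ * B vperp p = (3 * lam - ι) / 2 * vperp p)) := by
  have hblock : ∀ j k i i', B (EuclideanSpace.single (k, i') 1) (j, i)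
      = (if i = i' then (if i = 0 then -2 else 1) else 0) * collinearCoupling m ξ j k :=
    hB ▸ fderiv_gradient_newtonU_collinear m hξ hr
  refine ⟨fun j k hjk i i' => by rw [hblock, collinearCoupling_of_ne m ξ hjk, mul_comm], ?_⟩
  intro v ι hv vh vperp hvh hvperp
  have hcollinear : ∀ j, lam * v j + (m j)⁻¹ * (-2 * ∑ k, collinearCoupling m ξ j k * v k)
      = ι * v j := fun j => by
    simpa [hblock, Finset.mul_sum, mul_assoc] using hv j
  refine ⟨fun ⟨j, i⟩ => ?_, fun ⟨j, i⟩ => ?_⟩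
  · rw [EuclideanSpace.apply_eq_of_diagonal_kronecker hblock hvh]
    fin_cases i
    · simp only [Fin.zero_eta, Fin.isValue, hvh, ↓reduceIte, neg_mul, mul_neg]
      linear_combination hcollinear j
    · simp [hvh]
  · rw [EuclideanSpace.apply_eq_of_diagonal_kronecker hblock hvperp]
    fin_cases i
    · simp [hvperp]
    · simp only [Fin.mk_one, Fin.isValue, hvperp, ↓reduceIte, one_ne_zero, one_mul]
      linear_combination -(hcollinear j) / 2

/-- At a collinear central configuration `r = (ξ₁,0,…,ξ_N,0)` with multiplier `λ`:
the off-diagonal `2×2` blocks of the Hessian `B` of the planar potential are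
`(m_j m_k / r_{jk}³)·diag(-2,1)`; moreover any eigenvector `v` (eigenvalue `ι`) of
the collinear operator `λ I + M₁⁻¹ B₁` lifts horizontally to an eigenvector of
`λ I + M⁻¹ B` with eigenvalue `ι`, and its rotation is an eigenvector with
eigenvalue `(3λ - ι)/2`. -/
theorem stmt19 (N : ℕ) (hN : 2 ≤ N) (m : Fin N → ℝ) (hm : ∀ k, 0 < m k)
    (ξ : Fin N → ℝ) (hξ : Function.Injective ξ)
    (r : EuclideanSpace ℝ (Fin N × Fin 2))
    (hr : ∀ p : Fin N × Fin 2, r p = if p.2 = 0 then ξ p.1 else 0)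
    (lam : ℝ)
    (hgrad : ∀ p : Fin N × Fin 2, gradient (newtonU N m) r p = -lam * (m p.1 * r p))
    (B : EuclideanSpace ℝ (Fin N × Fin 2) →L[ℝ] EuclideanSpace ℝ (Fin N × Fin 2))
    (hB : B = fderiv ℝ (gradient (newtonU N m)) r) :
    (∀ j k : Fin N, j ≠ k → ∀ i i' : Fin 2,
      B (EuclideanSpace.single (k, i') 1) (j, i)
        = m j * m k / |ξ k - ξ j| ^ 3 *
            (if i = i' then (if i = 0 then -2 else 1) else 0)) ∧
    (∀ (v : Fin N → ℝ) (ι : ℝ),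
      (∀ j : Fin N, lam * v j + (m j)⁻¹ *
          (∑ k : Fin N, B (EuclideanSpace.single (k, (0 : Fin 2)) 1) (j, 0) * v k)
        = ι * v j) →
      ∀ (vh vperp : EuclideanSpace ℝ (Fin N × Fin 2)),
        (∀ p : Fin N × Fin 2, vh p = if p.2 = 0 then v p.1 else 0) →
        (∀ p : Fin N × Fin 2, vperp p = if p.2 = 1 then v p.1 else 0) →
        (∀ p : Fin N × Fin 2,
          lam * vh p + (m p.1)⁻¹ * B vh p = ι * vh p) ∧
        (∀ p : Fin N × Fin 2,
          lam * vperp p + (m p.1)⁻¹ * B vperp p = (3 * lam - ι) / 2 * vperp p)) :=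
  stmt19_general N m ξ hξ r hr lam B hB
end
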